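/- arXiv:math/0302012 — 4 statements merged into one kernel-verified Lean document; each statement's English description precedes it below -/
import Mathlib

section
/- Let k > 0 and let (φ, d, Γ) : I → ℝ³ solve the ODE system φ' = -dφ, d' = -(d² + Γ)/2 + φ - 4k², Γ' = 2d(φ - 4k² - Γ) on an interval I containing 0, with φ(t) ≠ 0 for all t. Then the quantity (2φ(t) - Γ(t) - 4k²)/φ(t)² is constant on I. -/
/-! With `N = 2φ - Γ - c`, the quotient rule gives `φ³ · (N/φ²)' = N'φ - 2φ'N`, and substituting
`φ' = -dφ`, `Γ' = 2d(φ - c - Γ)` makes this vanish identically. A function with zero derivative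
on an interval is constant there. -/

theorem Set.OrdConnected.eq_of_hasDerivAt_eq_zero {E : Type*} [NormedAddCommGroup E]
    [NormedSpace ℝ E] {s : Set ℝ} (hs : s.OrdConnected) {f : ℝ → E}
    (hf : ∀ x ∈ s, HasDerivAt f 0 x) {x y : ℝ} (hx : x ∈ s) (hy : y ∈ s) : f y = f x := by
  have hle : ‖f y - f x‖ ≤ 0 * ‖y - x‖ :=
    hs.convex.norm_image_sub_le_of_norm_hasDerivWithin_le
      (fun z hz => (hf z hz).hasDerivWithinAt) (fun _ _ => norm_zero.le) hx hy
  rw [zero_mul, norm_le_zero_iff, sub_eq_zero] at hle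
  exact hle

noncomputable def firstMaterialInvariant (c : ℝ) (φ Γ : ℝ → ℝ) (t : ℝ) : ℝ :=
  (2 * φ t - Γ t - c) / φ t ^ 2

theorem hasDerivAt_firstMaterialInvariant {c : ℝ} {φ d Γ : ℝ → ℝ} {t : ℝ}
    (hφ : HasDerivAt φ (-(d t) * φ t) t)
    (hΓ : HasDerivAt Γ (2 * d t * (φ t - c - Γ t)) t) (hne : φ t ≠ 0) :
    HasDerivAt (firstMaterialInvariant c φ Γ) 0 t := by
  have hnum : HasDerivAt (fun t => 2 * φ t - Γ t - c)
      (2 * (-(d t) * φ t) - 2 * d t * (φ t - c - Γ t)) t :=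
    ((hφ.const_mul 2).sub hΓ).sub_const c
  have hden : HasDerivAt (fun t => φ t ^ 2) (2 * φ t * (-(d t) * φ t)) t := by
    simpa using hφ.fun_pow 2
  refine (hnum.fun_div hden (pow_ne_zero 2 hne)).congr_deriv ?_
  rw [div_eq_zero_iff]
  exact Or.inl (by ring)

theorem first_material_invariant_general (k : ℝ) (I : Set ℝ)
    (hI : I.OrdConnected) (h0 : (0 : ℝ) ∈ I)
    (φ d Γ : ℝ → ℝ)
    (hφ : ∀ t ∈ I, HasDerivAt φ (-(d t) * φ t) t)
    (hΓ : ∀ t ∈ I, HasDerivAt Γ (2 * d t * (φ t - 4 * k ^ 2 - Γ t)) t)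
    (hne : ∀ t ∈ I, φ t ≠ 0) :
    ∀ t ∈ I, (2 * φ t - Γ t - 4 * k ^ 2) / (φ t) ^ 2
      = (2 * φ 0 - Γ 0 - 4 * k ^ 2) / (φ 0) ^ 2 := fun _ ht =>
  hI.eq_of_hasDerivAt_eq_zero
    (fun s hs => hasDerivAt_firstMaterialInvariant (hφ s hs) (hΓ s hs) (hne s hs)) h0 ht

/-- First material invariant: along solutions of the spectral dynamics system
`φ' = -dφ`, `d' = -(d² + Γ)/2 + φ - 4k²`, `Γ' = 2d(φ - 4k² - Γ)` with `φ ≠ 0`,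
the quantity `(2φ - Γ - 4k²)/φ²` is constant. -/
theorem first_material_invariant (k : ℝ) (hk : 0 < k) (I : Set ℝ)
    (hI : I.OrdConnected) (h0 : (0 : ℝ) ∈ I)
    (φ d Γ : ℝ → ℝ)
    (hφ : ∀ t ∈ I, HasDerivAt φ (-(d t) * φ t) t)
    (hd : ∀ t ∈ I, HasDerivAt d (-((d t) ^ 2 + Γ t) / 2 + φ t - 4 * k ^ 2) t)
    (hΓ : ∀ t ∈ I, HasDerivAt Γ (2 * d t * (φ t - 4 * k ^ 2 - Γ t)) t)
    (hne : ∀ t ∈ I, φ t ≠ 0) :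
    ∀ t ∈ I, (2 * φ t - Γ t - 4 * k ^ 2) / (φ t) ^ 2
      = (2 * φ 0 - Γ 0 - 4 * k ^ 2) / (φ 0) ^ 2 :=
  first_material_invariant_general k I hI h0 φ d Γ hφ hΓ hne
end

section
/- Let k > 0 and let (φ, d, Γ) : I → ℝ³ solve φ' = -dφ, d' = -(d² + Γ)/2 + φ - 4k², Γ' = 2d(φ - 4k² - Γ) on an interval I containing 0, with φ(t) ≠ 0 for all t. Then (d(t)² - Γ(t) + 2φ(t))/φ(t) is constant on I. -/
/-!
The numerator `N = d² - Γ + 2φ` obeys the same linear equation `N' = -d N` as `φ` itself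
(the `k`-terms and the `dφ`-terms cancel), so `N / φ` is a quotient of two solutions of one
scalar linear ODE and has zero derivative; on the interval `I` it is therefore constant.
-/

theorem Convex.is_const_of_hasDerivWithinAt_zero {𝕜 G : Type*} [RCLike 𝕜]
    [NormedAddCommGroup G] [NormedSpace 𝕜 G] {f : 𝕜 → G} {s : Set 𝕜} {x y : 𝕜}
    (hs : Convex ℝ s) (hf : ∀ z ∈ s, HasDerivWithinAt f 0 s z) (hx : x ∈ s) (hy : y ∈ s) :
    f x = f y := by
  have h := hs.norm_image_sub_le_of_norm_hasDerivWithin_le hf (fun _ _ => norm_zero.le) hx hy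
  rwa [zero_mul, norm_le_zero_iff, sub_eq_zero, eq_comm] at h

theorem HasDerivAt.div_of_same_rate {𝕜 : Type*} [NontriviallyNormedField 𝕜] {f g : 𝕜 → 𝕜}
    {a x : 𝕜} (hf : HasDerivAt f (a * f x) x) (hg : HasDerivAt g (a * g x) x) (hgx : g x ≠ 0) :
    HasDerivAt (fun y => f y / g y) 0 x := by
  have h := hf.div hg hgx
  rwa [show a * f x * g x - f x * (a * g x) = 0 by ring, zero_div] at h

theorem hasDerivAt_secondInvariant_numerator {k t : ℝ} {φ d Γ : ℝ → ℝ}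
    (hφ : HasDerivAt φ (-(d t) * φ t) t)
    (hd : HasDerivAt d (-((d t) ^ 2 + Γ t) / 2 + φ t - 4 * k ^ 2) t)
    (hΓ : HasDerivAt Γ (2 * d t * (φ t - 4 * k ^ 2 - Γ t)) t) :
    HasDerivAt (fun s => d s ^ 2 - Γ s + 2 * φ s) (-(d t) * (d t ^ 2 - Γ t + 2 * φ t)) t := by
  refine (((hd.pow 2).sub hΓ).add (hφ.const_mul 2)).congr_deriv ?_
  ring

theorem second_material_invariant_general (k : ℝ) (I : Set ℝ)
    (hI : I.OrdConnected) (h0 : (0 : ℝ) ∈ I)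
    (φ d Γ : ℝ → ℝ)
    (hφ : ∀ t ∈ I, HasDerivAt φ (-(d t) * φ t) t)
    (hd : ∀ t ∈ I, HasDerivAt d (-((d t) ^ 2 + Γ t) / 2 + φ t - 4 * k ^ 2) t)
    (hΓ : ∀ t ∈ I, HasDerivAt Γ (2 * d t * (φ t - 4 * k ^ 2 - Γ t)) t)
    (hne : ∀ t ∈ I, φ t ≠ 0) :
    ∀ t ∈ I, ((d t) ^ 2 - Γ t + 2 * φ t) / φ t
      = ((d 0) ^ 2 - Γ 0 + 2 * φ 0) / φ 0 := by
  intro t ht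
  have hderiv : ∀ s ∈ I,
      HasDerivWithinAt (fun s => (d s ^ 2 - Γ s + 2 * φ s) / φ s) 0 I s := fun s hs =>
    ((hasDerivAt_secondInvariant_numerator (hφ s hs) (hd s hs) (hΓ s hs)).div_of_same_rate
      (hφ s hs) (hne s hs)).hasDerivWithinAt
  exact hI.convex.is_const_of_hasDerivWithinAt_zero hderiv ht h0

/-- Second material invariant: along solutions of the spectral dynamics system
`φ' = -dφ`, `d' = -(d² + Γ)/2 + φ - 4k²`, `Γ' = 2d(φ - 4k² - Γ)` with `φ ≠ 0`,
the quantity `(d² - Γ + 2φ)/φ` is constant. -/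
theorem second_material_invariant (k : ℝ) (hk : 0 < k) (I : Set ℝ)
    (hI : I.OrdConnected) (h0 : (0 : ℝ) ∈ I)
    (φ d Γ : ℝ → ℝ)
    (hφ : ∀ t ∈ I, HasDerivAt φ (-(d t) * φ t) t)
    (hd : ∀ t ∈ I, HasDerivAt d (-((d t) ^ 2 + Γ t) / 2 + φ t - 4 * k ^ 2) t)
    (hΓ : ∀ t ∈ I, HasDerivAt Γ (2 * d t * (φ t - 4 * k ^ 2 - Γ t)) t)
    (hne : ∀ t ∈ I, φ t ≠ 0) :
    ∀ t ∈ I, ((d t) ^ 2 - Γ t + 2 * φ t) / φ t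
      = ((d 0) ^ 2 - Γ 0 + 2 * φ 0) / φ 0 :=
  second_material_invariant_general k I hI h0 φ d Γ hφ hd hΓ hne
end

section
/- Let k > 0, C₀ ≤ 0, and let (φ, d) solve φ' = -φd, d' = -½(d² + 4k² - C₀φ²) with initial data (φ₀, d₀), φ₀ > 0. Then the solution cannot exist globally forward in time: d satisfies d' ≤ -½(d² + 4k²) and blows up to -∞ in finite time. -/
/-!
Since `C₀ ≤ 0`, the term `-C₀ φ²` only helps: `d' ≤ -(d² + (2k)²) / 2` on `[0, ∞)`.
Along such a Riccati inequality `θ = arctan (d / 2k)` satisfies `θ' ≤ -k`, so `θ` would leave the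
interval `(-π/2, π/2)` before time `π / k`; hence no solution survives that long.
-/

open Real Set

lemma sub_le_mul_sub_of_hasDerivAt_le {f : ℝ → ℝ} {a b C : ℝ} (hab : a ≤ b)
    (hf : ∀ t ∈ Icc a b, ∃ f', HasDerivAt f f' t ∧ f' ≤ C) :
    f b - f a ≤ C * (b - a) := by
  choose f' hf' hf'C using hf
  refine (convex_Icc a b).image_sub_le_mul_sub_of_deriv_le
    (fun t ht => (hf' t ht).continuousAt.continuousWithinAt)
    (fun t ht => (hf' t (interior_subset ht)).differentiableAt.differentiableWithinAt)
    (fun t ht => ?_) a (left_mem_Icc.2 hab) b (right_mem_Icc.2 hab) hab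
  rw [(hf' t (interior_subset ht)).deriv]
  exact hf'C t _

lemma exists_hasDerivAt_arctan_div_le {d : ℝ → ℝ} {d' a c t : ℝ} (ha : 0 < a)
    (hd : HasDerivAt d d' t) (hle : d' ≤ -c * (d t ^ 2 + a ^ 2)) :
    ∃ θ', HasDerivAt (fun s => arctan (d s / a)) θ' t ∧ θ' ≤ -c * a := by
  refine ⟨_, (hd.div_const a).arctan, ?_⟩
  have hpos : 0 < d t ^ 2 + a ^ 2 := by positivity
  have hrw : 1 / (1 + (d t / a) ^ 2) * (d' / a) = a * d' / (d t ^ 2 + a ^ 2) := by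
    field_simp
    ring
  rw [hrw, div_le_iff₀ hpos]
  nlinarith

theorem riccati_inequality_no_global_solution {d d' : ℝ → ℝ} {a c : ℝ} (ha : 0 < a) (hc : 0 < c)
    (hd : ∀ t, 0 ≤ t → HasDerivAt d (d' t) t)
    (hle : ∀ t, 0 ≤ t → d' t ≤ -c * (d t ^ 2 + a ^ 2)) : False := by
  set T := π / (c * a)
  have hT : 0 ≤ T := by positivity
  have hdrop : arctan (d T / a) - arctan (d 0 / a) ≤ -c * a * (T - 0) :=
    sub_le_mul_sub_of_hasDerivAt_le hT
      fun t ht => exists_hasDerivAt_arctan_div_le ha (hd t ht.1) (hle t ht.1)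
  have hcT : c * a * T = π := mul_div_cancel₀ π (by positivity)
  have hθT := neg_pi_div_two_lt_arctan (d T / a)
  have hθ0 := arctan_lt_pi_div_two (d 0 / a)
  linarith

theorem supercritical_breakdown_general (k C₀ : ℝ) (hk : 0 < k) (hC : C₀ ≤ 0)
    (φ d : ℝ → ℝ)
    (hd : ∀ t : ℝ, 0 ≤ t →
      HasDerivAt d (-(1 / 2) * ((d t) ^ 2 + 4 * k ^ 2 - C₀ * (φ t) ^ 2)) t) : False := by
  refine riccati_inequality_no_global_solution (a := 2 * k) (c := 1 / 2) (by positivity)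
    (by norm_num) hd fun t _ => ?_
  have : C₀ * φ t ^ 2 ≤ 0 := mul_nonpos_of_nonpos_of_nonneg hC (sq_nonneg _)
  linarith

/-- Supercritical breakdown: if `C₀ ≤ 0` and `φ₀ > 0`, the reduced system
`φ' = -φd`, `d' = -(d² + 4k² - C₀φ²)/2` admits no global forward-in-time solution. -/
theorem supercritical_breakdown (k C₀ : ℝ) (hk : 0 < k) (hC : C₀ ≤ 0)
    (φ d : ℝ → ℝ)
    (hφ : ∀ t : ℝ, 0 ≤ t → HasDerivAt φ (-(φ t) * d t) t)
    (hd : ∀ t : ℝ, 0 ≤ t →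
      HasDerivAt d (-(1 / 2) * ((d t) ^ 2 + 4 * k ^ 2 - C₀ * (φ t) ^ 2)) t)
    (hφ0 : 0 < φ 0) : False :=
  supercritical_breakdown_general k C₀ hk hC φ d hd
end

section
/- Let k > 0 and suppose (ω, d) : ℝ → ℝ² solves ω' = d(2k - ω), d' = -d² - 2kω with initial data satisfying (2k - ω₀)² > d₀² + ω₀². Then the solution exists globally and is bounded; moreover ω(t) < 2k for all t and the orbit {(ω(t), d(t))} lies on the ellipse {(ω,d) : (2k-ω)² = B₀(d² + ω²)} where B₀ = (2k-ω₀)²/(d₀² + ω₀²) > 1. -/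
/-!
Along a solution, `P = 2k - ω` satisfies `P' = -d P` and `N = d² + ω²` satisfies `N' = -2d N`,
so `P²` and `N` solve the same scalar linear equation `y' = -2d y`. Both are therefore their
initial values times the same positive factor `exp (-2 ∫₀ᵗ d)`, which makes `B = P² / N`
conserved: the orbit stays on the level set `P² = B₀ N`. For `B₀ > 1` this level set is a
bounded ellipse lying in the half-plane `ω < k`.
-/

open Real

theorem eq_mul_exp_integral_of_hasDerivAt_mul {y a : ℝ → ℝ} (ha : Continuous a)
    (hy : ∀ t, HasDerivAt y (a t * y t) t) (t : ℝ) :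
    y t = y 0 * exp (∫ s in (0 : ℝ)..t, a s) := by
  set A : ℝ → ℝ := fun t => ∫ s in (0 : ℝ)..t, a s
  have hA : ∀ t, HasDerivAt A (a t) t := fun t => (ha.integral_hasStrictDerivAt 0 t).hasDerivAt
  have hconst : ∀ t, HasDerivAt (fun t => y t * exp (-A t)) 0 t := fun t =>
    ((hy t).mul (hA t).neg.exp).congr_deriv (by ring)
  have h := is_const_of_deriv_eq_zero (fun t => (hconst t).differentiableAt)
    (fun t => (hconst t).deriv) t 0
  simp only [A, intervalIntegral.integral_same, neg_zero, exp_zero, mul_one] at h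
  rw [← h, mul_assoc, ← exp_add, neg_add_cancel, exp_zero, mul_one]

section RotatingEuler

variable {k : ℝ} {ω d : ℝ → ℝ}

theorem hasDerivAt_two_mul_sub_sq (hω : ∀ t, HasDerivAt ω (d t * (2 * k - ω t)) t) (t : ℝ) :
    HasDerivAt (fun t => (2 * k - ω t) ^ 2) (-2 * d t * (2 * k - ω t) ^ 2) t :=
  (((hω t).const_sub (2 * k)).pow 2).congr_deriv (by ring)

theorem hasDerivAt_sq_add_sq (hω : ∀ t, HasDerivAt ω (d t * (2 * k - ω t)) t)
    (hd : ∀ t, HasDerivAt d (-(d t) ^ 2 - 2 * k * ω t) t) (t : ℝ) :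
    HasDerivAt (fun t => d t ^ 2 + ω t ^ 2) (-2 * d t * (d t ^ 2 + ω t ^ 2)) t :=
  (((hd t).pow 2).add ((hω t).pow 2)).congr_deriv (by ring)

theorem two_mul_sub_sq_mul_eq (hω : ∀ t, HasDerivAt ω (d t * (2 * k - ω t)) t)
    (hd : ∀ t, HasDerivAt d (-(d t) ^ 2 - 2 * k * ω t) t) (t : ℝ) :
    (2 * k - ω t) ^ 2 * (d 0 ^ 2 + ω 0 ^ 2) = (2 * k - ω 0) ^ 2 * (d t ^ 2 + ω t ^ 2) := by
  have hdc : Continuous fun t => -2 * d t :=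
    continuous_const.mul (continuous_iff_continuousAt.2 fun t => (hd t).continuousAt)
  rw [eq_mul_exp_integral_of_hasDerivAt_mul hdc (hasDerivAt_two_mul_sub_sq hω) t,
    eq_mul_exp_integral_of_hasDerivAt_mul hdc (hasDerivAt_sq_add_sq hω hd) t]
  ring

end RotatingEuler

section Ellipse

variable {k b w x : ℝ}

theorem lt_of_two_mul_sub_sq_eq (hk : 0 < k) (hb : 1 < b)
    (h : (2 * k - w) ^ 2 = b * (x ^ 2 + w ^ 2)) : w < k := by
  by_contra! hw
  have hw0 : 0 < w := hk.trans_le hw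
  nlinarith [mul_pos (sub_pos.2 hb) (mul_pos hw0 hw0), mul_nonneg hk.le (sub_nonneg.2 hw),
    mul_nonneg (zero_le_one.trans hb.le) (sq_nonneg x)]

theorem sq_add_sq_le_of_two_mul_sub_sq_eq (hb : 1 < b)
    (h : (2 * k - w) ^ 2 = b * (x ^ 2 + w ^ 2)) :
    x ^ 2 + w ^ 2 ≤ 8 * k ^ 2 * (b + 1) / (b - 1) ^ 2 := by
  have hb' : 0 < b - 1 := by linarith
  have hb'' : 0 < b + 1 := by linarith
  rw [le_div_iff₀ (by positivity)]
  -- Young's inequality `-8(b-1)kw ≤ (b-1)²w² + 16k²` absorbs the cross term.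
  nlinarith [sq_nonneg ((b - 1) * w + 4 * k), mul_nonneg (mul_pos hb' hb'').le (sq_nonneg x)]

end Ellipse

/-- Subcritical global boundedness for the 1D rotational system: if
`(2k - ω₀)² > d₀² + ω₀²` (with `(d₀, ω₀) ≠ 0`, so `B₀ > 1`), the global solution of
`ω' = d(2k - ω)`, `d' = -d² - 2kω` is bounded, satisfies `ω < 2k`, and its orbit lies
on the ellipse `(2k - ω)² = B₀ (d² + ω²)`. -/
theorem subcritical_global_bounded (k : ℝ) (hk : 0 < k)
    (ω d : ℝ → ℝ)
    (hω : ∀ t : ℝ, HasDerivAt ω (d t * (2 * k - ω t)) t)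
    (hd : ∀ t : ℝ, HasDerivAt d (-(d t) ^ 2 - 2 * k * ω t) t)
    (hnz : (d 0) ^ 2 + (ω 0) ^ 2 ≠ 0)
    (hsub : (2 * k - ω 0) ^ 2 > (d 0) ^ 2 + (ω 0) ^ 2) :
    (∃ C : ℝ, ∀ t : ℝ, |ω t| ≤ C ∧ |d t| ≤ C) ∧
    (∀ t : ℝ, ω t < 2 * k) ∧
    ((2 * k - ω 0) ^ 2 / ((d 0) ^ 2 + (ω 0) ^ 2) > 1 ∧
      ∀ t : ℝ, (2 * k - ω t) ^ 2
        = (2 * k - ω 0) ^ 2 / ((d 0) ^ 2 + (ω 0) ^ 2) * ((d t) ^ 2 + (ω t) ^ 2)) := by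
  set b := (2 * k - ω 0) ^ 2 / ((d 0) ^ 2 + (ω 0) ^ 2)
  have hb : 1 < b := (one_lt_div (lt_of_le_of_ne (by positivity) hnz.symm)).2 hsub
  have hell : ∀ t, (2 * k - ω t) ^ 2 = b * ((d t) ^ 2 + (ω t) ^ 2) := fun t => by
    rw [div_mul_eq_mul_div, eq_div_iff hnz, two_mul_sub_sq_mul_eq hω hd t]
  refine ⟨⟨√(8 * k ^ 2 * (b + 1) / (b - 1) ^ 2), fun t => ?_⟩,
    fun t => by linarith [lt_of_two_mul_sub_sq_eq hk hb (hell t)], hb, hell⟩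
  have hN := sq_add_sq_le_of_two_mul_sub_sq_eq hb (hell t)
  exact ⟨abs_le_sqrt (by nlinarith [sq_nonneg (d t)]),
    abs_le_sqrt (by nlinarith [sq_nonneg (ω t)])⟩
end
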